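/- For all n, k: ∑_{j=0}^{n} C(n+1, 2n-2j+1)·T(j+1, k+1) = (k+1)·LS(n+1, k+1). -/
import Mathlib

/-- Central factorial numbers of the second kind:
T(n,k) = T(n-1,k-1) + k² T(n-1,k), T(0,k)=[k=0], T(n,0)=[n=0]. -/
def centralFactorialT : ℕ → ℕ → ℕ
  | 0, 0 => 1
  | 0, _ + 1 => 0
  | _ + 1, 0 => 0
  | n + 1, k + 1 => centralFactorialT n k + (k + 1) ^ 2 * centralFactorialT n (k + 1)

/-- Legendre-Stirling numbers:
LS(n,k) = LS(n-1,k-1) + k(k+1) LS(n-1,k), LS(0,k)=[k=0], LS(n,0)=[n=0]. -/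
def legendreStirling : ℕ → ℕ → ℕ
  | 0, 0 => 1
  | 0, _ + 1 => 0
  | _ + 1, 0 => 0
  | n + 1, k + 1 => legendreStirling n k + (k + 1) * (k + 2) * legendreStirling n (k + 1)

open Finset

private def Asum (n K : ℕ) : ℕ :=
  ∑ j ∈ range (n+1), (n+1).choose (2*(n-j)+1) * centralFactorialT (j+1) K

private def Bsum (n K : ℕ) : ℕ :=
  ∑ j ∈ range (n+1), (n+1).choose (2*(n-j)+2) * centralFactorialT (j+1) K

lemma T_succ_zero (n : ℕ) : centralFactorialT (n+1) 0 = 0 := rfl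

lemma T_succ_succ (n k : ℕ) :
    centralFactorialT (n+1) (k+1)
      = centralFactorialT n k + (k+1)^2 * centralFactorialT n (k+1) := rfl

lemma LS_succ_zero (n : ℕ) : legendreStirling (n+1) 0 = 0 := rfl

lemma LS_succ_succ (n k : ℕ) :
    legendreStirling (n+1) (k+1)
      = legendreStirling n k + (k+1)*(k+2) * legendreStirling n (k+1) := rfl

lemma T_one (K : ℕ) : centralFactorialT 1 K = legendreStirling 1 K := by
  match K with
  | 0 => rfl
  | 1 => rfl
  | (k+2) => simp [centralFactorialT, legendreStirling]

lemma Asum_zero (n : ℕ) : Asum n 0 = 0 := by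
  unfold Asum
  apply Finset.sum_eq_zero
  intro j _
  simp [T_succ_zero]

lemma Bsum_zero (n : ℕ) : Bsum n 0 = 0 := by
  unfold Bsum
  apply Finset.sum_eq_zero
  intro j _
  simp [T_succ_zero]

lemma shiftQ (n k : ℕ) :
    ∑ j ∈ range (n+2), (n+1).choose (2*(n+1-j)+1) * centralFactorialT (j+1) (k+1)
      = Asum n k + (k+1)^2 * Asum n (k+1) := by
  rw [Finset.sum_range_succ']
  have h0 : (n+1).choose (2*(n+1-0)+1) = 0 := Nat.choose_eq_zero_of_lt (by omega)
  rw [h0, zero_mul, add_zero]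
  unfold Asum
  rw [Finset.mul_sum, ← Finset.sum_add_distrib]
  apply Finset.sum_congr rfl
  intro j hj
  have h1 : n+1-(j+1) = n-j := by omega
  rw [h1, T_succ_succ]
  ring

lemma shiftR (n k : ℕ) :
    ∑ j ∈ range (n+2), (n+1).choose (2*(n+1-j)+2) * centralFactorialT (j+1) (k+1)
      = Bsum n k + (k+1)^2 * Bsum n (k+1) := by
  rw [Finset.sum_range_succ']
  have h0 : (n+1).choose (2*(n+1-0)+2) = 0 := Nat.choose_eq_zero_of_lt (by omega)
  rw [h0, zero_mul, add_zero]
  unfold Bsum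
  rw [Finset.mul_sum, ← Finset.sum_add_distrib]
  apply Finset.sum_congr rfl
  intro j hj
  have h1 : n+1-(j+1) = n-j := by omega
  rw [h1, T_succ_succ]
  ring

lemma splitP (n K : ℕ) :
    ∑ j ∈ range (n+2), (n+1).choose (2*(n+1-j)) * centralFactorialT (j+1) K
      = Bsum n K + centralFactorialT (n+2) K := by
  rw [Finset.sum_range_succ]
  congr 1
  · unfold Bsum
    apply Finset.sum_congr rfl
    intro j hj
    rw [Finset.mem_range] at hj
    have h1 : 2*(n+1-j) = 2*(n-j)+2 := by omega
    rw [h1]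
  · simp

lemma Astep_expand (n K : ℕ) :
    Asum (n+1) K
      = (∑ j ∈ range (n+2), (n+1).choose (2*(n+1-j)) * centralFactorialT (j+1) K)
        + ∑ j ∈ range (n+2), (n+1).choose (2*(n+1-j)+1) * centralFactorialT (j+1) K := by
  unfold Asum
  rw [← Finset.sum_add_distrib]
  apply Finset.sum_congr rfl
  intro j _
  rw [Nat.choose_succ_succ, add_mul]

lemma Bstep_expand (n K : ℕ) :
    Bsum (n+1) K
      = (∑ j ∈ range (n+2), (n+1).choose (2*(n+1-j)+1) * centralFactorialT (j+1) K)
        + ∑ j ∈ range (n+2), (n+1).choose (2*(n+1-j)+2) * centralFactorialT (j+1) K := by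
  unfold Bsum
  rw [← Finset.sum_add_distrib]
  apply Finset.sum_congr rfl
  intro j _
  rw [show 2*(n+1-j)+2 = (2*(n+1-j)+1)+1 by ring, Nat.choose_succ_succ, add_mul]

lemma main_joint (n : ℕ) : ∀ K : ℕ,
    Asum n K = K * legendreStirling (n+1) K ∧
    Bsum n K + centralFactorialT (n+2) K
      = legendreStirling (n+1) (K-1) + K^2 * legendreStirling (n+1) K := by
  induction n with
  | zero =>
    intro K
    constructor
    · unfold Asum
      rw [Finset.sum_range_one]
      norm_num
      rw [T_one]
      match K with
      | 0 => rfl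
      | 1 => rfl
      | (k+2) => simp [legendreStirling]
    · unfold Bsum
      rw [Finset.sum_range_one]
      norm_num
      match K with
      | 0 => rfl
      | (k+1) =>
        rw [T_succ_succ, T_one, T_one]
        simp
  | succ n ih =>
    intro K
    match K with
    | 0 =>
      refine ⟨by rw [Asum_zero]; simp, ?_⟩
      rw [Bsum_zero, show centralFactorialT (n+3) 0 = 0 from rfl]
      simp [LS_succ_zero]
    | (k+1) =>
      obtain ⟨ihA0, ihB0⟩ := ih k
      obtain ⟨ihA1, ihB1⟩ := ih (k+1)
      have hA : Asum (n+1) (k+1)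
          = (Bsum n (k+1) + centralFactorialT (n+2) (k+1))
            + (Asum n k + (k+1)^2 * Asum n (k+1)) := by
        rw [Astep_expand, splitP, shiftQ]
      have hB : Bsum (n+1) (k+1)
          = (Asum n k + (k+1)^2 * Asum n (k+1))
            + (Bsum n k + (k+1)^2 * Bsum n (k+1)) := by
        rw [Bstep_expand, shiftQ, shiftR]
      constructor
      · rw [hA, ihB1, ihA0, ihA1]
        rw [show legendreStirling (n+2) (k+1)
            = legendreStirling (n+1) k + (k+1)*(k+2) * legendreStirling (n+1) (k+1)
            from rfl]
        simp only [Nat.add_sub_cancel]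
        ring
      · rw [hB, ihA0, ihA1,
          show centralFactorialT (n+3) (k+1)
            = centralFactorialT (n+2) k + (k+1)^2 * centralFactorialT (n+2) (k+1)
            from rfl]
        simp only [Nat.add_sub_cancel]
        rw [show legendreStirling (n+2) (k+1)
            = legendreStirling (n+1) k + (k+1)*(k+2) * legendreStirling (n+1) (k+1)
            from rfl]
        match k with
        | 0 =>
          have h1 : Bsum n 0 = 0 := Bsum_zero n
          have h2 : centralFactorialT (n+2) 0 = 0 := rfl
          have h3 : legendreStirling (n+2) 0 = 0 := rfl
          have h4 : legendreStirling (n+1) 0 = 0 := rfl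
          simp only [h1, h2, h3, h4] at *
          omega
        | (k'+1) =>
          have hLS2 : legendreStirling (n+2) (k'+1)
              = legendreStirling (n+1) k' + (k'+1)*(k'+2) * legendreStirling (n+1) (k'+1) := rfl
          rw [hLS2]
          simp only [Nat.add_sub_cancel] at ihB0 ihB1 ⊢
          zify at ihB0 ihB1 ⊢
          linear_combination ihB0 + ((k'+1:ℤ)+1)^2 * ihB1

theorem sum_choose_centralFactorialT_odd (n k : ℕ) :
    ∑ j ∈ Finset.range (n + 1),
        (n + 1).choose (2 * n - 2 * j + 1) * centralFactorialT (j + 1) (k + 1) =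
      (k + 1) * legendreStirling (n + 1) (k + 1) := by
  have h : ∑ j ∈ Finset.range (n + 1),
        (n + 1).choose (2 * n - 2 * j + 1) * centralFactorialT (j + 1) (k + 1)
      = Asum n (k+1) := by
    unfold Asum
    apply Finset.sum_congr rfl
    intro j hj
    rw [Finset.mem_range] at hj
    have : 2 * n - 2 * j = 2 * (n - j) := by omega
    rw [this]
  rw [h, (main_joint n (k+1)).1]
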